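/- arXiv:2111.07643 — 4 statements merged into one kernel-verified Lean document; each statement's English description precedes it below -/
import Mathlib

section
/- Let β > 0, γ > 0 and κ > 1 be real numbers with βκ(κ−1) > γ, and let x* = κ(β(κ−1) − γ)/(βκ(κ−1) − γ) be the endemic steady-state infected fraction of the MF2 system. Then x* > 0 if and only if β/γ > 1/(κ−1); that is, the epidemic threshold of the second-order mean-field model is located at β/γ = (κ−1)^{-1}. -/
/-- MF2 epidemic threshold: the endemic steady-state infected fraction
`x* = κ(β(κ-1) - γ)/(βκ(κ-1) - γ)` is positive iff `β/γ > 1/(κ-1)`. -/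
theorem mf2_epidemic_threshold (β γ κ : ℝ) (hβ : 0 < β) (hγ : 0 < γ) (hκ : 1 < κ)
    (hden : γ < β * κ * (κ - 1))
    (xs : ℝ) (hxs : xs = κ * (β * (κ - 1) - γ) / (β * κ * (κ - 1) - γ)) :
    0 < xs ↔ β / γ > 1 / (κ - 1) := by
  have hκ1 : 0 < κ - 1 := by linarith
  have hκ0 : 0 < κ := by linarith
  have hd : 0 < β * κ * (κ - 1) - γ := by linarith
  rw [hxs, div_pos_iff]
  constructor
  · rintro (⟨h1, _⟩ | ⟨_, h2⟩)
    · have hnum : 0 < β * (κ - 1) - γ := by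
        by_contra h
        push_neg at h
        nlinarith
      rw [gt_iff_lt, div_lt_div_iff₀ hκ1 hγ]
      nlinarith
    · linarith
  · intro h
    rw [gt_iff_lt, div_lt_div_iff₀ hκ1 hγ] at h
    left
    constructor
    · nlinarith
    · linarith
end

section
/- Let β > 0, γ > 0 and κ > 1 be real numbers with β(κ−1) > γ, and let x* = κ(β(κ−1) − γ)/(βκ(κ−1) − γ), y* = γ(β(κ−1) − γ)/(β(βκ(κ−1) − γ)) be the endemic steady state of the MF2 system. Then 0 < x* < 1 and the steady-state nearest-neighbour correlations satisfy: C_II := (x* − y*)/(x*)² = (βκ − γ)(βκ(κ−1) − γ)/(βκ²(β(κ−1) − γ)), C_SI := y*/(x*(1 − x*)) = 1 − γ/(βκ(κ−1)), and C_SS := (1 − x* − y*)/(1 − x*)² = (βκ(κ−1) − γ)/(β(κ−1)²). -/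
/-!
Write `N = β(κ-1) - γ` and `D = βκ(κ-1) - γ`, so that `x* = κN/D` and `y* = γN/(βD)`.
The identities `D - κN = γ(κ-1)` and `β(κ-1) - N = γ` put every motif fraction of the steady
state in product form: `1 - x* = γ(κ-1)/D`, `x* - y* = N(βκ-γ)/(βD)` and
`1 - x* - y* = γ²/(βD)`. Each correlation is then a quotient of monomials in `N`, `D`, `β`, `γ`,
`κ`, `κ-1`, and positivity of `x*` and `1 - x*` follows from `N > 0`, `D = N + β(κ-1)² > 0`.
-/

namespace MF2

noncomputable def endemicX (β γ κ : ℝ) : ℝ :=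
  κ * (β * (κ - 1) - γ) / (β * κ * (κ - 1) - γ)

noncomputable def endemicY (β γ κ : ℝ) : ℝ :=
  γ * (β * (κ - 1) - γ) / (β * (β * κ * (κ - 1) - γ))

variable {β γ κ : ℝ}

lemma endemic_denom_pos (hβ : 0 < β) (hthr : γ < β * (κ - 1)) :
    0 < β * κ * (κ - 1) - γ := by
  have hD : β * κ * (κ - 1) - γ = (β * (κ - 1) - γ) + β * (κ - 1) ^ 2 := by ring
  rw [hD]
  have := sub_pos.2 hthr
  positivity

lemma one_sub_endemicX (hD : β * κ * (κ - 1) - γ ≠ 0) :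
    1 - endemicX β γ κ = γ * (κ - 1) / (β * κ * (κ - 1) - γ) := by
  rw [endemicX, eq_div_iff hD, sub_mul, div_mul_cancel₀ _ hD]
  ring

lemma endemicX_sub_endemicY (hβ : β ≠ 0) :
    endemicX β γ κ - endemicY β γ κ
      = (β * (κ - 1) - γ) * (β * κ - γ) / (β * (β * κ * (κ - 1) - γ)) := by
  rw [endemicX, endemicY]
  field_simp

lemma one_sub_endemicX_sub_endemicY (hβ : β ≠ 0) (hD : β * κ * (κ - 1) - γ ≠ 0) :
    1 - endemicX β γ κ - endemicY β γ κ = γ ^ 2 / (β * (β * κ * (κ - 1) - γ)) := by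
  rw [one_sub_endemicX hD, endemicY]
  field_simp
  ring

lemma endemicX_mem_Ioo (hβ : 0 < β) (hγ : 0 < γ) (hκ : 1 < κ) (hthr : γ < β * (κ - 1)) :
    endemicX β γ κ ∈ Set.Ioo 0 1 := by
  have hN := sub_pos.2 hthr
  have hD := endemic_denom_pos hβ hthr
  have hκ1 := sub_pos.2 hκ
  have hκ0 : 0 < κ := by linarith
  have h1x := one_sub_endemicX hD.ne'
  refine ⟨by rw [endemicX]; positivity, ?_⟩
  have : 0 < 1 - endemicX β γ κ := by rw [h1x]; positivity
  linarith

lemma correlation_II (hβ : β ≠ 0) :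
    (endemicX β γ κ - endemicY β γ κ) / endemicX β γ κ ^ 2
      = (β * κ - γ) * (β * κ * (κ - 1) - γ) / (β * κ ^ 2 * (β * (κ - 1) - γ)) := by
  rw [endemicX_sub_endemicY hβ, endemicX]
  field_simp

lemma correlation_SI (hβ : β ≠ 0) (hγ : γ ≠ 0) (hκ : κ ≠ 0) (hκ1 : κ - 1 ≠ 0)
    (hN : β * (κ - 1) - γ ≠ 0) (hD : β * κ * (κ - 1) - γ ≠ 0) :
    endemicY β γ κ / (endemicX β γ κ * (1 - endemicX β γ κ))
      = 1 - γ / (β * κ * (κ - 1)) := by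
  rw [one_sub_endemicX hD, endemicX, endemicY]
  field_simp

lemma correlation_SS (hβ : β ≠ 0) (hγ : γ ≠ 0) (hD : β * κ * (κ - 1) - γ ≠ 0) :
    (1 - endemicX β γ κ - endemicY β γ κ) / (1 - endemicX β γ κ) ^ 2
      = (β * κ * (κ - 1) - γ) / (β * (κ - 1) ^ 2) := by
  rw [one_sub_endemicX_sub_endemicY hβ hD, one_sub_endemicX hD]
  field_simp

end MF2

open MF2 in
/-- MF2 steady-state nearest-neighbour correlations for SIS spreading on a
degree-homogeneous network: the endemic state satisfies `0 < x* < 1` and the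
correlations `C_II`, `C_SI`, `C_SS` take the stated closed forms. -/
theorem mf2_steady_state_correlations (β γ κ : ℝ) (hβ : 0 < β) (hγ : 0 < γ) (hκ : 1 < κ)
    (hthr : γ < β * (κ - 1))
    (xs ys : ℝ)
    (hxs : xs = κ * (β * (κ - 1) - γ) / (β * κ * (κ - 1) - γ))
    (hys : ys = γ * (β * (κ - 1) - γ) / (β * (β * κ * (κ - 1) - γ))) :
    (0 < xs ∧ xs < 1) ∧
    (xs - ys) / xs ^ 2
      = (β * κ - γ) * (β * κ * (κ - 1) - γ) / (β * κ ^ 2 * (β * (κ - 1) - γ)) ∧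
    ys / (xs * (1 - xs)) = 1 - γ / (β * κ * (κ - 1)) ∧
    (1 - xs - ys) / (1 - xs) ^ 2 = (β * κ * (κ - 1) - γ) / (β * (κ - 1) ^ 2) := by
  have hN := sub_pos.2 hthr
  have hD := endemic_denom_pos hβ hthr
  have hκ1 := sub_pos.2 hκ
  have hκ0 : 0 < κ := by linarith
  subst hxs hys
  exact ⟨endemicX_mem_Ioo hβ hγ hκ hthr,
    correlation_II hβ.ne',
    correlation_SI hβ.ne' hγ.ne' hκ0.ne' hκ1.ne' hN.ne' hD.ne',
    correlation_SS hβ.ne' hγ.ne' hD.ne'⟩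
end

section
/- Let γ > 0 and κ > 1 be fixed real numbers. The MF2 steady-state infected–infected correlation C_II(β) = (βκ − γ)(βκ(κ−1) − γ)/(βκ²(β(κ−1) − γ)) tends to +∞ as β tends to γ/(κ−1) from above; that is, the infected–infected correlation of the pair approximation diverges at the epidemic threshold. -/
/-!
At `β₀ = γ/(κ-1)` the factor `β(κ-1) - γ` of the denominator vanishes, and it is positive just
above `β₀`, so the denominator tends to `0` from above. The numerator is continuous and equals
`γ/(κ-1) · γ(κ-1) = γ²` at `β₀`, so the quotient is a positive quantity divided by a vanishing
positive one.
-/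

open Filter Topology

theorem Filter.Tendsto.pos_div_nhdsGT_zero {α 𝕜 : Type*} [Field 𝕜] [LinearOrder 𝕜]
    [IsStrictOrderedRing 𝕜] [TopologicalSpace 𝕜] [OrderTopology 𝕜] {l : Filter α}
    {f g : α → 𝕜} {c : 𝕜} (hc : 0 < c) (hf : Tendsto f l (𝓝 c)) (hg : Tendsto g l (𝓝[>] 0)) :
    Tendsto (fun x => f x / g x) l atTop := by
  simpa only [div_eq_mul_inv, Pi.inv_apply] using hf.pos_mul_atTop hc hg.inv_tendsto_nhdsGT_zero

section Threshold

variable {γ κ : ℝ}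

lemma mf2_numerator_at_threshold (hκ : 1 < κ) :
    (γ / (κ - 1) * κ - γ) * (γ / (κ - 1) * κ * (κ - 1) - γ) = γ ^ 2 := by
  have : κ - 1 ≠ 0 := by linarith
  field_simp
  ring

lemma mf2_denominator_tendsto_nhdsGT_zero (hγ : 0 < γ) (hκ : 1 < κ) :
    Tendsto (fun β : ℝ => β * κ ^ 2 * (β * (κ - 1) - γ)) (𝓝[>] (γ / (κ - 1))) (𝓝[>] 0) := by
  have hκ1 : 0 < κ - 1 := by linarith
  have hvanish : γ / (κ - 1) * κ ^ 2 * (γ / (κ - 1) * (κ - 1) - γ) = 0 := by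
    rw [div_mul_cancel₀ γ hκ1.ne', sub_self, mul_zero]
  refine tendsto_nhdsWithin_of_tendsto_nhds_of_eventually_within _ ?_ ?_
  · rw [← hvanish]
    exact ((by fun_prop : Continuous fun β : ℝ => β * κ ^ 2 * (β * (κ - 1) - γ)).tendsto
      _).mono_left nhdsWithin_le_nhds
  · filter_upwards [self_mem_nhdsWithin] with β (hβ : γ / (κ - 1) < β)
    have hβpos : 0 < β := (div_pos hγ hκ1).trans hβ
    have hfactor : 0 < β * (κ - 1) - γ := sub_pos.2 ((div_lt_iff₀ hκ1).1 hβ)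
    exact Set.mem_Ioi.2 (by positivity)

end Threshold

/-- The MF2 steady-state infected–infected correlation diverges at the epidemic
threshold: `C_II(β) → +∞` as `β → γ/(κ-1)` from above. -/
theorem mf2_CII_diverges_at_threshold (γ κ : ℝ) (hγ : 0 < γ) (hκ : 1 < κ) :
    Tendsto
      (fun β : ℝ =>
        (β * κ - γ) * (β * κ * (κ - 1) - γ) / (β * κ ^ 2 * (β * (κ - 1) - γ)))
      (𝓝[>] (γ / (κ - 1))) atTop := by
  have hnum : Tendsto (fun β : ℝ => (β * κ - γ) * (β * κ * (κ - 1) - γ))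
      (𝓝[>] (γ / (κ - 1))) (𝓝 (γ ^ 2)) := by
    rw [← mf2_numerator_at_threshold hκ]
    exact ((by fun_prop : Continuous fun β : ℝ => (β * κ - γ) * (β * κ * (κ - 1) - γ)).tendsto
      _).mono_left nhdsWithin_le_nhds
  exact hnum.pos_div_nhdsGT_zero (by positivity) (mf2_denominator_tendsto_nhdsGT_zero hγ hκ)
end

section
/- Let G be a finite connected simple graph that is chordal, i.e. every cycle in G of length at least 4 has a chord (an edge of G joining two non-consecutive vertices of the cycle). Then there exists a tree T whose vertex set is the set of maximal cliques of G such that for every vertex v of G, the set of maximal cliques of G containing v induces a connected (hence tree) subgraph of T. -/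
/-!
By Dirac's lemma a chordal graph has a simplicial vertex `v`: minimal separators are cliques,
since two nonadjacent vertices of one would close a chordless cycle of length at least four
through the two sides. The only maximal clique containing `v` is `N[v]`, so a junction forest
for `G - v` becomes one for `G` by renaming the node `N(v)` to `N[v]` when `N(v)` is a maximal
clique of `G - v`, and otherwise by hanging `N[v]` as a leaf on a maximal clique containing
`N(v)`. Any forest on the maximal cliques extends to a spanning tree, and adding edges keeps
the induced subgraphs connected.
-/

namespace SimpleGraph

variable {V : Type*} {G : SimpleGraph V}

namespace Walk

variable {u w x y : V}

lemma exists_length_lt_of_adj_of_length_takeUntil_lt [DecidableEq V] (p : G.Walk u w)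
    (hx : x ∈ p.support) (hy : y ∈ p.support) (hxy : G.Adj x y) (he : s(x, y) ∉ p.edges)
    (hlt : (p.takeUntil x hx).length < (p.takeUntil y hy).length) :
    ∃ q : G.Walk u w, q.length < p.length ∧ q.support ⊆ p.support := by
  refine ⟨(p.takeUntil x hx).append (cons hxy (p.dropUntil y hy)), ?_, ?_⟩
  · have hsucc : (p.takeUntil x hx).length + 1 ≠ (p.takeUntil y hy).length := by
      intro h
      refine he ((p.mk_mem_edges_iff_exists).2 ⟨(p.takeUntil x hx).length, ?_, ?_⟩)
      · have := p.length_takeUntil_le_length hy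
        omega
      · rw [h, getVert_length_takeUntil, getVert_length_takeUntil]
    have hlen := congrArg length (p.take_spec hy)
    simp only [length_append, length_cons] at hlen ⊢
    omega
  · intro z hz
    rw [mem_support_append_iff, support_cons, List.mem_cons] at hz
    rcases hz with hz | hz | hz
    · exact p.support_takeUntil_subset_support hx hz
    · exact hz ▸ hx
    · exact p.support_dropUntil_subset_support hy hz

lemma exists_length_lt_of_adj (p : G.Walk u w) (hx : x ∈ p.support) (hy : y ∈ p.support)
    (hxy : G.Adj x y) (he : s(x, y) ∉ p.edges) :
    ∃ q : G.Walk u w, q.length < p.length ∧ q.support ⊆ p.support := by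
  classical
  rcases lt_trichotomy (p.takeUntil x hx).length (p.takeUntil y hy).length with h | h | h
  · exact p.exists_length_lt_of_adj_of_length_takeUntil_lt hx hy hxy he h
  · refine absurd ?_ hxy.ne
    rw [← getVert_length_takeUntil hx, h, getVert_length_takeUntil]
  · exact p.exists_length_lt_of_adj_of_length_takeUntil_lt hy hx hxy.symm
      (by rwa [Sym2.eq_swap]) h

theorem exists_isPath_isChordless_support_subset (p : G.Walk u w) :
    ∃ q : G.Walk u w, q.IsPath ∧ q.IsChordless ∧ q.support ⊆ p.support := by
  classical
  obtain ⟨q, hqp, hmin⟩ := (InvImage.wf (length (G := G) (u := u) (v := w))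
    wellFounded_lt).has_min {r | r.support ⊆ p.support} ⟨p, List.Subset.refl _⟩
  have hsub : q.bypass.support ⊆ p.support :=
    List.Subset.trans q.support_bypass_subset_support hqp
  refine ⟨q.bypass, q.bypass_isPath, isChordless_iff_forall_mem_edges.2 ?_, hsub⟩
  intro x y hx hy hxy
  by_contra he
  obtain ⟨r, hr, hrsub⟩ := q.bypass.exists_length_lt_of_adj hx hy hxy he
  exact hmin r (List.Subset.trans hrsub hsub) (hr.trans_le q.length_bypass_le_length)

lemma IsPath.start_notMem_support_tail {p : G.Walk u w} (hp : p.IsPath) : u ∉ p.support.tail := by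
  have := hp.support_nodup
  rw [← p.cons_tail_support] at this
  exact (List.nodup_cons.1 this).1

lemma one_lt_length_of_not_adj (p : G.Walk u w) (hne : u ≠ w) (hadj : ¬G.Adj u w) :
    1 < p.length := by
  rcases Nat.lt_or_ge p.length 2 with h | h
  · interval_cases hp : p.length
    · exact absurd (p.eq_of_length_eq_zero hp) hne
    · exact absurd (adj_of_length_eq_one hp) hadj
  · exact h

end Walk

def IsChordal (G : SimpleGraph V) : Prop :=
  ∀ ⦃u : V⦄ (c : G.Walk u u), c.IsCycle → 4 ≤ c.length → ¬c.IsChordless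

/-- The two paths close up a cycle of length at least four, and a chord of it can only cross
from one path to the other. -/
theorem IsChordal.exists_adj_of_isChordless {u v : V} (hG : G.IsChordal) {p q : G.Walk u v}
    (hp : p.IsPath) (hq : q.IsPath) (hpc : p.IsChordless) (hqc : q.IsChordless) (hne : u ≠ v)
    (huv : ¬G.Adj u v) (hpq : ∀ z ∈ p.support, z ∈ q.support → z = u ∨ z = v) :
    ∃ x ∈ p.support, ∃ y ∈ q.support,
      x ∉ q.support ∧ y ∉ p.support ∧ G.Adj x y := by
  have hdisj : p.support.tail.Disjoint q.reverse.support.tail := by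
    intro z hzp hzq
    have hzq' : z ∈ q.support := by
      simpa using List.mem_of_mem_tail hzq
    rcases hpq z (List.mem_of_mem_tail hzp) hzq' with rfl | rfl
    exacts [hp.start_notMem_support_tail hzp, hq.reverse.start_notMem_support_tail hzq]
  have hcyc := hp.isCycle_append hq.reverse hdisj (Or.inl (p.one_lt_length_of_not_adj hne huv))
  have hlen : 4 ≤ (p.append q.reverse).length := by
    have := p.one_lt_length_of_not_adj hne huv
    have := q.one_lt_length_of_not_adj hne huv
    simp only [Walk.length_append, Walk.length_reverse]
    omega
  have hchord := hG _ hcyc hlen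
  simp only [Walk.isChordless_iff_forall_mem_edges, Walk.mem_support_append_iff,
    Walk.support_reverse, List.mem_reverse, Walk.edges_append, Walk.edges_reverse,
    List.mem_append, not_forall] at hchord
  obtain ⟨x, y, hx, hy, hxy, he⟩ := hchord
  have hp' : ¬(x ∈ p.support ∧ y ∈ p.support) := fun h =>
    he (Or.inl (hpc.mem_edges h.1 h.2 hxy))
  have hq' : ¬(x ∈ q.support ∧ y ∈ q.support) := fun h =>
    he (Or.inr (hqc.mem_edges h.1 h.2 hxy))
  obtain ⟨hxp, hxq, hyq, hyp⟩ | ⟨hyp, hyq, hxq, hxp⟩ :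
      (x ∈ p.support ∧ x ∉ q.support ∧ y ∈ q.support ∧ y ∉ p.support) ∨
        (y ∈ p.support ∧ y ∉ q.support ∧ x ∈ q.support ∧ x ∉ p.support) := by
    tauto
  exacts [⟨x, hxp, y, hyq, hxq, hyp, hxy⟩, ⟨y, hyp, x, hxq, hyq, hxp, hxy.symm⟩]

def ReachableIn (G : SimpleGraph V) (W : Set V) (x y : V) : Prop :=
  ∃ p : G.Walk x y, ∀ z ∈ p.support, z ∈ W

namespace ReachableIn

variable {W W' : Set V} {a b x y z : V}

lemma refl (hx : x ∈ W) : G.ReachableIn W x x := ⟨.nil, by simpa⟩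

lemma of_adj (hxy : G.Adj x y) (hx : x ∈ W) (hy : y ∈ W) : G.ReachableIn W x y :=
  ⟨hxy.toWalk, by simp [hx, hy]⟩

lemma right_mem (h : G.ReachableIn W x y) : y ∈ W :=
  h.elim fun p hp => hp y p.end_mem_support

lemma symm (h : G.ReachableIn W x y) : G.ReachableIn W y x :=
  h.elim fun p hp => ⟨p.reverse, fun z hz => hp z (by simpa using hz)⟩

lemma trans (h : G.ReachableIn W x y) (h' : G.ReachableIn W y z) : G.ReachableIn W x z := by
  obtain ⟨p, hp⟩ := h
  obtain ⟨q, hq⟩ := h'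
  exact ⟨p.append q, fun w hw => ((Walk.mem_support_append_iff _ _).1 hw).elim (hp w) (hq w)⟩

lemma mono (h : G.ReachableIn W x y) (hW : W ⊆ W') : G.ReachableIn W' x y :=
  h.elim fun p hp => ⟨p, fun z hz => hW (hp z hz)⟩

lemma adj (h : G.ReachableIn W x y) (hyz : G.Adj y z) (hz : z ∈ W) : G.ReachableIn W x z :=
  h.trans (of_adj hyz h.right_mem hz)

lemma subset_component (ha : G.ReachableIn W a x) (h : G.ReachableIn W x y) :
    G.ReachableIn {z | G.ReachableIn W a z} x y := by
  classical
  obtain ⟨p, hp⟩ := h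
  exact ⟨p, fun z hz => ha.trans
    ⟨p.takeUntil z hz, fun w hw => hp w (p.support_takeUntil_subset_support hz hw)⟩⟩

lemma adj_of_subset_pair (h : G.ReachableIn W a b) (hW : W ⊆ {a, b}) (hab : a ≠ b) :
    G.Adj a b := by
  obtain ⟨p, hp⟩ := h
  cases p with
  | nil => exact absurd rfl hab
  | @cons _ c _ hadj q =>
    rcases hW (hp c (by simp)) with rfl | rfl
    exacts [absurd rfl hadj.ne, hadj]

lemma exists_adj_of_insert {s : V} (h : G.ReachableIn (insert s W) a b) (ha : a ∈ W)
    (hab : ¬G.ReachableIn W a b) : ∃ x, G.ReachableIn W a x ∧ G.Adj x s := by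
  obtain ⟨p, hp⟩ := h
  induction p with
  | nil => exact absurd (refl ha) hab
  | @cons a c b hac q ih =>
    by_cases hcs : c = s
    · exact ⟨a, refl ha, hcs ▸ hac⟩
    have hc : c ∈ W := (hp c (by simp)).resolve_left hcs
    have hac' : G.ReachableIn W a c := of_adj hac ha hc
    obtain ⟨x, hcx, hxs⟩ :=
      ih hc (fun h => hab (hac'.trans h)) (fun z hz => hp z (by simp [hz]))
    exact ⟨x, hac'.trans hcx, hxs⟩

end ReachableIn

def SeparatesIn (G : SimpleGraph V) (U S : Set V) (a b : V) : Prop :=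
  S ⊆ U ∧ a ∈ U \ S ∧ b ∈ U \ S ∧ ¬G.ReachableIn (U \ S) a b

section Separator

variable {U S : Set V} {a b : V}

lemma separatesIn_comm : G.SeparatesIn U S a b ↔ G.SeparatesIn U S b a :=
  ⟨fun h => ⟨h.1, h.2.2.1, h.2.1, fun h' => h.2.2.2 h'.symm⟩,
    fun h => ⟨h.1, h.2.2.1, h.2.1, fun h' => h.2.2.2 h'.symm⟩⟩

lemma SeparatesIn.not_reachableIn (h : G.SeparatesIn U S a b) {x y : V}
    (hx : G.ReachableIn (U \ S) a x) (hy : G.ReachableIn (U \ S) b y) :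
    ¬G.ReachableIn (U \ S) x y :=
  fun hxy => h.2.2.2 ((hx.trans hxy).trans hy.symm)

lemma exists_minimal_separatesIn [Finite V] (ha : a ∈ U) (hb : b ∈ U) (hab : a ≠ b)
    (hadj : ¬G.Adj a b) : ∃ S, Minimal (G.SeparatesIn U · a b) S := by
  have hpair : U \ (U \ {a, b}) ⊆ {a, b} := fun z hz => by_contra fun h => hz.2 ⟨hz.1, h⟩
  obtain ⟨S, -, hS⟩ := Finite.exists_le_minimal (p := (G.SeparatesIn U · a b))
    (a := U \ {a, b}) ⟨Set.sdiff_subset, ⟨ha, by simp⟩, ⟨hb, by simp⟩,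
      fun h => hadj (h.adj_of_subset_pair hpair hab)⟩
  exact ⟨S, hS⟩

lemma exists_adj_of_minimal_separatesIn (hS : Minimal (G.SeparatesIn U · a b) S) {s : V}
    (hs : s ∈ S) : ∃ x, G.ReachableIn (U \ S) a x ∧ G.Adj x s := by
  obtain ⟨hSU, ha, hb, hab⟩ := hS.prop
  have hreach : G.ReachableIn (U \ (S \ {s})) a b := by
    by_contra h
    have := hS.le_of_le ⟨Set.sdiff_subset.trans hSU, ⟨ha.1, fun h => ha.2 h.1⟩,
      ⟨hb.1, fun h => hb.2 h.1⟩, h⟩ Set.sdiff_subset hs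
    simp at this
  refine (hreach.mono fun z hz => ?_).exists_adj_of_insert ha hab
  by_cases hzs : z = s
  · exact Or.inl hzs
  · exact Or.inr ⟨hz.1, fun h => hz.2 ⟨h, hzs⟩⟩

/-- Two nonadjacent vertices `s, t` of `S` would be joined by chordless paths through the
components of `a` and of `b`, which close up a chordless cycle of length at least four. -/
theorem IsChordal.isClique_of_minimal_separatesIn (hG : G.IsChordal)
    (hS : Minimal (G.SeparatesIn U · a b) S) : G.IsClique S := by
  intro s hs t ht hst
  by_contra hnadj
  have side : ∀ {c d}, Minimal (G.SeparatesIn U · c d) S → ∃ p : G.Walk s t, p.IsPath ∧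
      p.IsChordless ∧ ∀ z ∈ p.support, z = s ∨ z = t ∨ G.ReachableIn (U \ S) c z := by
    intro c d hS'
    obtain ⟨xs, hcxs, hxs⟩ := exists_adj_of_minimal_separatesIn hS' hs
    obtain ⟨xt, hcxt, hxt⟩ := exists_adj_of_minimal_separatesIn hS' ht
    have hxsxt : G.ReachableIn (insert s (insert t {z | G.ReachableIn (U \ S) c z})) xs xt :=
      (hcxs.subset_component (hcxs.symm.trans hcxt)).mono fun z hz => by simp [hz]
    obtain ⟨p₀, hp₀⟩ := (((ReachableIn.refl (Set.mem_insert s _)).adj hxs.symm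
      (by simp [hcxs])).trans hxsxt).adj hxt (by simp)
    obtain ⟨p, hp, hpc, hsub⟩ := p₀.exists_isPath_isChordless_support_subset
    exact ⟨p, hp, hpc, fun z hz => hp₀ z (hsub hz)⟩
  have hsep := hS.prop
  obtain ⟨p, hp, hpc, hpa⟩ := side hS
  obtain ⟨q, hq, hqc, hqb⟩ := side (d := a) (by simpa only [separatesIn_comm] using hS)
  have hpq : ∀ z ∈ p.support, z ∈ q.support → z = s ∨ z = t := by
    intro z hzp hzq
    rcases hpa z hzp with h | h | haz
    · exact Or.inl h
    · exact Or.inr h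
    rcases hqb z hzq with h | h | hbz
    · exact Or.inl h
    · exact Or.inr h
    exact absurd (ReachableIn.refl haz.right_mem) (hsep.not_reachableIn haz hbz)
  obtain ⟨x, hxp, y, hyq, hxq, hyp, hxy⟩ :=
    hG.exists_adj_of_isChordless hp hq hpc hqc hst hnadj hpq
  obtain rfl | rfl | hax := hpa x hxp
  · exact hxq q.start_mem_support
  · exact hxq q.end_mem_support
  obtain rfl | rfl | hby := hqb y hyq
  · exact hyp p.start_mem_support
  · exact hyp p.end_mem_support
  exact hsep.not_reachableIn hax hby (.of_adj hxy hax.right_mem hby.right_mem)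

end Separator

def IsSimplicialIn (G : SimpleGraph V) (U : Set V) (v : V) : Prop :=
  G.IsClique (G.neighborSet v ∩ U)

/-- The clique `K` is what lets the induction go through: a minimal separator `S` of two
nonadjacent vertices is a clique, so induction on `C ∪ S`, for the component `C` of `U \ S` that
misses `K`, yields a simplicial vertex in `C`, whose neighbourhood lies in `C ∪ S`. -/
theorem IsChordal.exists_isSimplicialIn_diff [Finite V] (hG : G.IsChordal) (U : Set V)
    {K : Set V} (hK : G.IsClique K) (hUK : ¬U ⊆ K) : ∃ v ∈ U \ K, G.IsSimplicialIn U v := by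
  induction U using WellFoundedLT.induction generalizing K with
  | _ U ih =>
  by_cases hU : G.IsClique U
  · obtain ⟨v, hvU, hvK⟩ := Set.not_subset.1 hUK
    exact ⟨v, ⟨hvU, hvK⟩, hU.subset Set.inter_subset_right⟩
  obtain ⟨a, ha, b, hb, hab, hnadj⟩ : ∃ a ∈ U, ∃ b ∈ U, a ≠ b ∧ ¬G.Adj a b := by
    simpa [IsClique, Set.Pairwise] using hU
  obtain ⟨S, hS⟩ := exists_minimal_separatesIn ha hb hab hnadj
  have side : ∀ {c d}, G.SeparatesIn U S c d →
      ∃ v, G.ReachableIn (U \ S) c v ∧ G.IsSimplicialIn U v := by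
    intro c d hsep
    have hlt : {z | G.ReachableIn (U \ S) c z} ∪ S < U := by
      refine lt_of_le_of_ne (Set.union_subset (fun z hz => hz.right_mem.1) hsep.1) fun h => ?_
      rcases h ▸ hsep.2.2.1.1 with hd | hd
      exacts [hsep.2.2.2 hd, hsep.2.2.1.2 hd]
    obtain ⟨v, ⟨hvC | hvS, hvS'⟩, hv⟩ := ih _ hlt (hG.isClique_of_minimal_separatesIn hS)
      fun h => hsep.2.1.2 (h (Or.inl (ReachableIn.refl hsep.2.1)))
    · refine ⟨v, hvC, IsClique.subset ?_ hv⟩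
      rintro z ⟨hvz, hzU⟩
      by_cases hzS : z ∈ S
      · exact ⟨hvz, Or.inr hzS⟩
      · exact ⟨hvz, Or.inl (hvC.adj hvz ⟨hzU, hzS⟩)⟩
    · exact absurd hvS hvS'
  by_cases hKa : ∃ x ∈ K, G.ReachableIn (U \ S) a x
  · obtain ⟨x, hxK, hax⟩ := hKa
    obtain ⟨v, hbv, hv⟩ := side (separatesIn_comm.1 hS.prop)
    refine ⟨v, ⟨hbv.right_mem.1, fun hvK => ?_⟩, hv⟩
    have hxv : x ≠ v := fun h => hS.prop.not_reachableIn hax hbv (h ▸ .refl hax.right_mem)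
    exact hS.prop.not_reachableIn hax hbv (.of_adj (hK hxK hvK hxv) hax.right_mem hbv.right_mem)
  · obtain ⟨v, hav, hv⟩ := side hS.prop
    exact ⟨v, ⟨hav.right_mem.1, fun hvK => hKa ⟨v, hvK, hav⟩⟩, hv⟩

def IsCliqueIn (G : SimpleGraph V) (U s : Set V) : Prop :=
  G.IsClique s ∧ s ⊆ U

section MaximalCliques

variable {U W C : Set V} {v : V}

lemma isCliqueIn_univ : G.IsCliqueIn Set.univ = G.IsClique := by
  ext s
  simp [IsCliqueIn]

lemma maximal_isCliqueIn_of_subset (hC : Maximal (G.IsCliqueIn U) C) (hCW : C ⊆ W)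
    (hWU : W ⊆ U) : Maximal (G.IsCliqueIn W) C :=
  ⟨⟨hC.prop.1, hCW⟩, fun _ ht hle => hC.le_of_ge ⟨ht.1, ht.2.trans hWU⟩ hle⟩

lemma subset_insert_neighborSet_inter (hC : G.IsClique C) (hCU : C ⊆ U) (hvC : v ∈ C) :
    C ⊆ insert v (G.neighborSet v ∩ U) := by
  intro z hz
  by_cases hzv : z = v
  · exact Or.inl hzv
  · exact Or.inr ⟨hC hvC hz (Ne.symm hzv), hCU hz⟩

lemma neighborSet_inter_subset_diff : G.neighborSet v ∩ U ⊆ U \ {v} :=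
  fun _ hz => ⟨hz.2, hz.1.ne'⟩

lemma IsSimplicialIn.isClique_insert (hv : G.IsSimplicialIn U v) :
    G.IsClique (insert v (G.neighborSet v ∩ U)) :=
  SimpleGraph.isClique_insert.2 ⟨hv, fun _ hz _ => hz.1⟩

lemma IsSimplicialIn.maximal_insert_neighborSet_inter (hvU : v ∈ U) (hv : G.IsSimplicialIn U v) :
    Maximal (G.IsCliqueIn U) (insert v (G.neighborSet v ∩ U)) :=
  ⟨⟨hv.isClique_insert, Set.insert_subset hvU Set.inter_subset_right⟩,
    fun _ ht hle => subset_insert_neighborSet_inter ht.1 ht.2 (hle (Set.mem_insert v _))⟩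

lemma IsSimplicialIn.eq_insert_of_maximal (hv : G.IsSimplicialIn U v)
    (hC : Maximal (G.IsCliqueIn U) C) (hvC : v ∈ C) : C = insert v (G.neighborSet v ∩ U) :=
  hC.eq_of_le ⟨hv.isClique_insert, Set.insert_subset (hC.prop.2 hvC) Set.inter_subset_right⟩
    (subset_insert_neighborSet_inter hC.prop.1 hC.prop.2 hvC)

lemma IsSimplicialIn.not_maximal_neighborSet_inter (hvU : v ∈ U)
    (hv : G.IsSimplicialIn U v) : ¬Maximal (G.IsCliqueIn U) (G.neighborSet v ∩ U) := fun h =>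
  have hvN := h.le_of_ge (hv.maximal_insert_neighborSet_inter hvU).prop (Set.subset_insert _ _)
    (Set.mem_insert v _)
  G.loopless.irrefl v hvN.1

lemma IsSimplicialIn.maximal_of_maximal_diff (hv : G.IsSimplicialIn U v)
    (hC : Maximal (G.IsCliqueIn (U \ {v})) C) (hCN : C ≠ G.neighborSet v ∩ U) :
    Maximal (G.IsCliqueIn U) C := by
  refine ⟨⟨hC.prop.1, hC.prop.2.trans Set.sdiff_subset⟩, fun t ht hle => ?_⟩
  by_cases hvt : v ∈ t
  · have hCN' : C ⊆ G.neighborSet v ∩ U := fun z hz =>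
      ((subset_insert_neighborSet_inter ht.1 ht.2 hvt (hle hz)).resolve_left (hC.prop.2 hz).2)
    exact absurd (hC.eq_of_le ⟨hv, neighborSet_inter_subset_diff⟩ hCN') hCN
  · exact hC.le_of_ge ⟨ht.1, fun z hz => ⟨ht.2 hz, fun h => hvt (h ▸ hz)⟩⟩ hle

lemma IsSimplicialIn.setOf_maximal_and_mem (hvU : v ∈ U)
    (hv : G.IsSimplicialIn U v) :
    {C | Maximal (G.IsCliqueIn U) C ∧ v ∈ C} = {insert v (G.neighborSet v ∩ U)} := by
  ext C
  exact ⟨fun h => hv.eq_insert_of_maximal h.1 h.2,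
    fun h => h ▸ ⟨hv.maximal_insert_neighborSet_inter hvU, Set.mem_insert v _⟩⟩

end MaximalCliques

lemma Connected.induce_comap {α β : Type*} {f : α → β} (hf : Function.Injective f)
    {T : SimpleGraph β} {S : Set β} (hS : S ⊆ Set.range f) (h : (T.induce S).Connected) :
    ((T.comap f).induce (f ⁻¹' S)).Connected := by
  choose g hg using hS
  let φ : T.induce S →g (T.comap f).induce (f ⁻¹' S) :=
    ⟨fun x => ⟨g x.2, by simp [hg]⟩, fun {x y} hxy => by simpa [hg] using hxy⟩
  exact h.map φ fun y => ⟨⟨f y, y.2⟩, Subtype.ext (hf (hg _))⟩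

/-- The forest is built on all of `Set V`, with every set other than a maximal clique inside `U`
isolated, so that its vertex type does not change as `U` shrinks. -/
structure IsJunctionForestIn (G : SimpleGraph V) (U : Set V) (T : SimpleGraph (Set V)) :
    Prop where
  isAcyclic : T.IsAcyclic
  maximal_of_adj : ∀ ⦃C D⦄, T.Adj C D → Maximal (G.IsCliqueIn U) C
  connected : ∀ v ∈ U, (T.induce {C | Maximal (G.IsCliqueIn U) C ∧ v ∈ C}).Connected

lemma isJunctionForestIn_empty : G.IsJunctionForestIn ∅ ⊥ :=
  ⟨isAcyclic_bot, fun _ _ h => h.elim, fun _ hv => hv.elim⟩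

section JunctionForest

variable {U : Set V} {v : V} {T : SimpleGraph (Set V)}

lemma IsSimplicialIn.connected_induce (hvU : v ∈ U) (hv : G.IsSimplicialIn U v) :
    (T.induce {C | Maximal (G.IsCliqueIn U) C ∧ v ∈ C}).Connected := by
  rw [hv.setOf_maximal_and_mem hvU]
  exact Connected.of_subsingleton

lemma mem_swap_insert_iff {N C : Set V} {u : V} (huv : u ≠ v) :
    u ∈ Equiv.swap N (insert v N) C ↔ u ∈ C := by
  by_cases hN : C = N
  · simp [hN, huv]
  by_cases hvN : C = insert v N
  · simp [hvN, huv]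
  · rw [Equiv.swap_apply_of_ne_of_ne hN hvN]

lemma IsSimplicialIn.maximal_iff_maximal_swap (hvU : v ∈ U) (hv : G.IsSimplicialIn U v)
    (hN : Maximal (G.IsCliqueIn (U \ {v})) (G.neighborSet v ∩ U)) {C : Set V} :
    Maximal (G.IsCliqueIn U) C ↔ Maximal (G.IsCliqueIn (U \ {v}))
      (Equiv.swap (G.neighborSet v ∩ U) (insert v (G.neighborSet v ∩ U)) C) := by
  by_cases hCN : C = G.neighborSet v ∩ U
  · rw [hCN, Equiv.swap_apply_left]
    exact iff_of_false (hv.not_maximal_neighborSet_inter hvU)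
      fun h => (h.prop.2 (Set.mem_insert v _)).2 rfl
  by_cases hCvN : C = insert v (G.neighborSet v ∩ U)
  · rw [hCvN, Equiv.swap_apply_right]
    exact iff_of_true (hv.maximal_insert_neighborSet_inter hvU) hN
  rw [Equiv.swap_apply_of_ne_of_ne hCN hCvN]
  refine ⟨fun hC => maximal_isCliqueIn_of_subset hC
    (fun z hz => ⟨hC.prop.2 hz, fun hzv => ?_⟩) Set.sdiff_subset,
    fun hC => hv.maximal_of_maximal_diff hC hCN⟩
  exact hCvN (hv.eq_insert_of_maximal hC (Set.mem_singleton_iff.1 hzv ▸ hz))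

lemma IsJunctionForestIn.comap_swap (hT : G.IsJunctionForestIn (U \ {v}) T) (hvU : v ∈ U)
    (hv : G.IsSimplicialIn U v) (hN : Maximal (G.IsCliqueIn (U \ {v})) (G.neighborSet v ∩ U)) :
    G.IsJunctionForestIn U
      (T.comap (Equiv.swap (G.neighborSet v ∩ U) (insert v (G.neighborSet v ∩ U)))) := by
  set e := Equiv.swap (G.neighborSet v ∩ U) (insert v (G.neighborSet v ∩ U))
  refine ⟨hT.isAcyclic.comap (Hom.comap e T) e.injective,
    fun C D h => (hv.maximal_iff_maximal_swap hvU hN).2 (hT.maximal_of_adj h), fun u hu => ?_⟩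
  rcases eq_or_ne u v with rfl | huv
  · exact hv.connected_induce hu
  have hset : {C | Maximal (G.IsCliqueIn U) C ∧ u ∈ C} =
      e ⁻¹' {C | Maximal (G.IsCliqueIn (U \ {v})) C ∧ u ∈ C} := by
    ext C
    simp only [Set.mem_ofPred_eq, Set.mem_preimage, hv.maximal_iff_maximal_swap hvU hN, e,
      mem_swap_insert_iff huv]
  rw [hset]
  exact (hT.connected u ⟨hu, huv⟩).induce_comap e.injective fun C _ => e.surjective C

lemma IsJunctionForestIn.sup_edge (hT : G.IsJunctionForestIn (U \ {v}) T) (hvU : v ∈ U)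
    (hv : G.IsSimplicialIn U v) (hN : ¬Maximal (G.IsCliqueIn (U \ {v})) (G.neighborSet v ∩ U))
    {C : Set V} (hC : Maximal (G.IsCliqueIn (U \ {v})) C) (hNC : G.neighborSet v ∩ U ⊆ C) :
    G.IsJunctionForestIn U (T ⊔ edge (insert v (G.neighborSet v ∩ U)) C) := by
  have hold : ∀ {D}, Maximal (G.IsCliqueIn (U \ {v})) D → Maximal (G.IsCliqueIn U) D :=
    fun hD => hv.maximal_of_maximal_diff hD (by rintro rfl; exact hN hD)
  have hne : insert v (G.neighborSet v ∩ U) ≠ C :=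
    fun h => (hC.prop.2 (h ▸ Set.mem_insert v _)).2 rfl
  refine ⟨hT.isAcyclic.sup_edge_of_not_reachable ?_, ?_, fun u hu => ?_⟩
  · rintro ⟨p⟩
    cases p with
    | nil => exact hne rfl
    | cons h _ => exact ((hT.maximal_of_adj h).prop.2 (Set.mem_insert v _)).2 rfl
  · rintro D D' (h | h)
    · exact hold (hT.maximal_of_adj h)
    · rw [edge_adj] at h
      obtain ⟨⟨rfl, rfl⟩ | ⟨rfl, rfl⟩, -⟩ := h
      exacts [hv.maximal_insert_neighborSet_inter hvU, hold hC]
  rcases eq_or_ne u v with rfl | huv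
  · exact hv.connected_induce hu
  have hset : {D | Maximal (G.IsCliqueIn U) D ∧ u ∈ D} =
      {D | Maximal (G.IsCliqueIn (U \ {v})) D ∧ u ∈ D} ∪
        {D | D = insert v (G.neighborSet v ∩ U) ∧ u ∈ D} := by
    ext D
    constructor
    · rintro ⟨hD, huD⟩
      by_cases hvD : v ∈ D
      · exact Or.inr ⟨hv.eq_insert_of_maximal hD hvD, huD⟩
      · exact Or.inl ⟨maximal_isCliqueIn_of_subset hD
          (fun z hz => ⟨hD.prop.2 hz, fun hzv => hvD (Set.mem_singleton_iff.1 hzv ▸ hz)⟩)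
          Set.sdiff_subset, huD⟩
    · rintro (⟨hD, huD⟩ | ⟨rfl, huD⟩)
      exacts [⟨hold hD, huD⟩, ⟨hv.maximal_insert_neighborSet_inter hvU, huD⟩]
  have hconn := (hT.connected u ⟨hu, huv⟩).mono
    (comap_monotone _ (le_sup_left : T ≤ T ⊔ edge (insert v (G.neighborSet v ∩ U)) C))
  rw [hset]
  by_cases huN : u ∈ G.neighborSet v ∩ U
  · have hleaf : {D | D = insert v (G.neighborSet v ∩ U) ∧ u ∈ D} =
        {insert v (G.neighborSet v ∩ U)} := by
      ext D
      exact ⟨And.left, fun h => ⟨h, h ▸ Or.inr huN⟩⟩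
    rw [hleaf]
    exact connected_induce_union hconn.preconnected Connected.of_subsingleton.preconnected
      (v := C) ⟨hC, hNC huN⟩ rfl (by simp [edge_adj, hne.symm])
  · have hleaf : {D | D = insert v (G.neighborSet v ∩ U) ∧ u ∈ D} = ∅ := by
      ext D
      simp only [Set.mem_ofPred_eq, Set.mem_empty_iff_false, iff_false, not_and]
      rintro rfl (h | h)
      exacts [huv h, huN h]
    rwa [hleaf, Set.union_empty]

end JunctionForest

theorem IsChordal.exists_isJunctionForestIn [Finite V] (hG : G.IsChordal) (U : Set V) :
    ∃ T, G.IsJunctionForestIn U T := by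
  induction U using WellFoundedLT.induction with
  | _ U ih =>
  rcases U.eq_empty_or_nonempty with rfl | ⟨w, hw⟩
  · exact ⟨⊥, isJunctionForestIn_empty⟩
  obtain ⟨v, ⟨hvU, -⟩, hv⟩ :=
    hG.exists_isSimplicialIn_diff U isClique_empty fun h => h hw
  obtain ⟨T, hT⟩ := ih (U \ {v}) (Set.sdiff_singleton_ssubset.2 hvU)
  by_cases hN : Maximal (G.IsCliqueIn (U \ {v})) (G.neighborSet v ∩ U)
  · exact ⟨_, hT.comap_swap hvU hv hN⟩
  · obtain ⟨C, hNC, hC⟩ := Finite.exists_le_maximal (p := G.IsCliqueIn (U \ {v}))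
      ⟨hv, neighborSet_inter_subset_diff⟩
    exact ⟨_, hT.sup_edge hvU hv hN hC hNC⟩

theorem IsJunctionForestIn.exists_isTree [Finite V] {T : SimpleGraph (Set V)}
    (hT : G.IsJunctionForestIn Set.univ T) :
    ∃ F : SimpleGraph {s : Set V // Maximal G.IsClique s}, F.IsTree ∧
      ∀ v : V,
        (F.induce {c : {s : Set V // Maximal G.IsClique s} | v ∈ (c : Set V)}).Connected := by
  obtain ⟨C, -, hC⟩ := Finite.exists_le_maximal (p := G.IsClique) G.isClique_empty
  have : Nonempty {s : Set V // Maximal G.IsClique s} := ⟨⟨C, hC⟩⟩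
  obtain ⟨F, hTF, -, hF⟩ := connected_top.exists_isTree_le_of_le_of_isAcyclic le_top
    (hT.isAcyclic.comap (Hom.comap (Subtype.val : {s // Maximal G.IsClique s} → Set V) T)
      Subtype.val_injective)
  refine ⟨F, hF, fun v => Connected.mono (comap_monotone _ hTF) ?_⟩
  have hset : {c : {s : Set V // Maximal G.IsClique s} | v ∈ (c : Set V)} =
      Subtype.val ⁻¹' {C | Maximal (G.IsCliqueIn Set.univ) C ∧ v ∈ C} := by
    ext c
    simp [isCliqueIn_univ, c.2]
  rw [hset]
  exact (hT.connected v trivial).induce_comap Subtype.val_injective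
    fun C hC => ⟨⟨C, isCliqueIn_univ (G := G) ▸ hC.1⟩, rfl⟩

end SimpleGraph

theorem chordal_junction_tree_general
    {V : Type*} [Fintype V] (G : SimpleGraph V)
    (hchordal : ∀ (u : V) (c : G.Walk u u), c.IsCycle → 4 ≤ c.length →
      ∃ x y : V, G.Adj x y ∧ x ∈ c.support ∧ y ∈ c.support ∧ s(x, y) ∉ c.edges) :
    ∃ T : SimpleGraph {s : Set V // Maximal G.IsClique s},
      T.IsTree ∧
      ∀ v : V,
        (T.induce {c : {s : Set V // Maximal G.IsClique s} | v ∈ (c : Set V)}).Connected := by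
  have hG : G.IsChordal := fun u c hc hlen hchordless => by
    obtain ⟨x, y, hxy, hx, hy, he⟩ := hchordal u c hc hlen
    exact he (hchordless.mem_edges hx hy hxy)
  obtain ⟨T, hT⟩ := hG.exists_isJunctionForestIn Set.univ
  exact hT.exists_isTree

/-- Every finite connected chordal graph (every cycle of length at least 4 has
a chord) admits a junction tree: a tree on its maximal cliques in which, for
every vertex `v`, the maximal cliques containing `v` induce a connected
subgraph. -/
theorem chordal_junction_tree
    {V : Type*} [Fintype V] (G : SimpleGraph V) (hconn : G.Connected)
    (hchordal : ∀ (u : V) (c : G.Walk u u), c.IsCycle → 4 ≤ c.length →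
      ∃ x y : V, G.Adj x y ∧ x ∈ c.support ∧ y ∈ c.support ∧ s(x, y) ∉ c.edges) :
    ∃ T : SimpleGraph {s : Set V // Maximal G.IsClique s},
      T.IsTree ∧
      ∀ v : V,
        (T.induce {c : {s : Set V // Maximal G.IsClique s} | v ∈ (c : Set V)}).Connected :=
  chordal_junction_tree_general G hchordal
end
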